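/- arXiv:2307.07737 — 4 statements merged into one kernel-verified Lean document; each statement's English description precedes it below -/
import Mathlib

section
/- For a discrete-time birth-death chain on {0,1,...,n} with constant birth probability p > 1/2, death probability q = 1-p (with certain death at state n and absorption at 0), started at state n, the extinction time T_n (number of steps until absorption at 0) satisfies P(T_n < i) ≤ (i-1)·(q/p)^{n-1} for every i ≥ 0. -/
open MeasureTheory Finset
open scoped ENNReal

namespace BDaux

variable {Ω : Type*} [MeasurableSpace Ω]

/-- Extend a finite path to a function `ℕ → ℕ`. -/
def ext (n m : ℕ) (v : Fin (m+1) → Fin (n+1)) : ℕ → ℕ :=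
  fun j => if h : j < m + 1 then (v ⟨j, h⟩ : ℕ) else 0

/-- Cylinder set determined by a finite path. -/
def cyl (X : ℕ → Ω → ℕ) (n m : ℕ) (v : Fin (m+1) → Fin (n+1)) : Set Ω :=
  {ω | ∀ j ≤ m, X j ω = ext n m v j}

lemma ext_eq (n m : ℕ) (v : Fin (m+1) → Fin (n+1)) (j : ℕ) (h : j < m+1) :
    ext n m v j = v ⟨j, h⟩ := by simp [ext, h]

lemma measurable_cyl (X : ℕ → Ω → ℕ) (hX : ∀ i, Measurable (X i)) (n m : ℕ)
    (v : Fin (m+1) → Fin (n+1)) : MeasurableSet (cyl X n m v) := by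
  have h : cyl X n m v = ⋂ j ∈ Set.Iic m, (X j) ⁻¹' {ext n m v j} := by
    ext ω; simp [cyl, Set.mem_iInter]
  rw [h]
  exact MeasurableSet.biInter (Set.to_countable _)
    (fun j _ => (hX j) (measurableSet_singleton _))

lemma disjoint_cyl (X : ℕ → Ω → ℕ) (n m : ℕ) {v w : Fin (m+1) → Fin (n+1)}
    (hvw : v ≠ w) : Disjoint (cyl X n m v) (cyl X n m w) := by
  rw [Set.disjoint_left]
  intro ω hv hw
  apply hvw
  funext j
  have h1 := hv j (Nat.lt_succ_iff.mp j.isLt)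
  have h2 := hw j (Nat.lt_succ_iff.mp j.isLt)
  have h3 := h1.symm.trans h2
  rw [ext_eq n m v j j.isLt, ext_eq n m w j j.isLt] at h3
  exact Fin.ext (by simpa using congrArg id h3)

lemma partition (P : Measure Ω) (X : ℕ → Ω → ℕ) (hX : ∀ i, Measurable (X i))
    (n : ℕ) (hrange : ∀ i ω, X i ω ≤ n) (m : ℕ) (A : Set Ω) (hA : MeasurableSet A) :
    P A = ∑ v : Fin (m+1) → Fin (n+1), P (A ∩ cyl X n m v) := by
  have hcover : A = ⋃ v ∈ (Finset.univ : Finset (Fin (m+1) → Fin (n+1))),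
      A ∩ cyl X n m v := by
    apply Set.Subset.antisymm
    · intro ω hω
      apply Set.mem_biUnion
        (Finset.mem_univ (fun j : Fin (m+1) => (⟨X (j : ℕ) ω, Nat.lt_succ_of_le (hrange _ ω)⟩ : Fin (n+1))))
      refine ⟨hω, ?_⟩
      intro j hj
      rw [ext_eq n m _ j (Nat.lt_succ_of_le hj)]
    · intro ω hω
      rcases Set.mem_iUnion₂.mp hω with ⟨v, -, h, -⟩
      exact h
  conv_lhs => rw [hcover]
  rw [measure_biUnion_finset ?_ ?_]
  · intro v _ w _ hvw
    exact (disjoint_cyl X n m hvw).mono Set.inter_subset_right Set.inter_subset_right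
  · intro v _
    exact hA.inter (measurable_cyl X hX n m v)

lemma total (P : Measure Ω) [IsProbabilityMeasure P] (X : ℕ → Ω → ℕ)
    (hX : ∀ i, Measurable (X i)) (n : ℕ) (hrange : ∀ i ω, X i ω ≤ n) (m : ℕ) :
    ∑ v : Fin (m+1) → Fin (n+1), P (cyl X n m v) = 1 := by
  have h := partition P X hX n hrange m Set.univ MeasurableSet.univ
  simp only [Set.univ_inter] at h
  rw [← h, measure_univ]

end BDaux

open BDaux

/-- Discrete-time birth-death chain on `{0,…,n}` with constant birth probability
`p > 1/2`, death probability `q = 1-p`, certain death at `n`, absorption at `0`,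
started at `n`: the extinction time satisfies `P(Tₙ < i) ≤ (i-1)·(q/p)^{n-1}`. -/
theorem stmt_0
    {Ω : Type*} [MeasurableSpace Ω] (P : Measure Ω) [IsProbabilityMeasure P]
    (n : ℕ) (hn : 1 ≤ n) (p : ℝ) (hp : 1 / 2 < p) (hp1 : p ≤ 1)
    (X : ℕ → Ω → ℕ) (hX : ∀ i, Measurable (X i))
    (trans : ℕ → ℕ → ℝ)
    (htrans00 : trans 0 0 = 1)
    (htransn : trans n (n - 1) = 1)
    (htransup : ∀ k, 1 ≤ k → k < n → trans k (k + 1) = p)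
    (htransdown : ∀ k, 1 ≤ k → k < n → trans k (k - 1) = 1 - p)
    (htranszero : ∀ k l, k ≤ n → l ≤ n →
      ¬(k = 0 ∧ l = 0) → ¬(k = n ∧ l = n - 1) →
      ¬(1 ≤ k ∧ k < n ∧ (l = k + 1 ∨ l = k - 1)) → trans k l = 0)
    (hstart : ∀ ω, X 0 ω = n)
    (hrange : ∀ i ω, X i ω ≤ n)
    (hmarkov : ∀ (i : ℕ) (f : ℕ → ℕ),
      P {ω | ∀ j ≤ i + 1, X j ω = f j}
        = P {ω | ∀ j ≤ i, X j ω = f j} * ENNReal.ofReal (trans (f i) (f (i + 1))))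
    (i : ℕ) :
    (P {ω | ∃ j < i, X j ω = 0}).toReal ≤ ((i - 1 : ℕ) : ℝ) * ((1 - p) / p) ^ (n - 1) := by
  have hp0 : (0:ℝ) < p := by linarith
  set r : ℝ := (1 - p) / p with hr_def
  have hr0 : 0 ≤ r := div_nonneg (by linarith) hp0.le
  have hrlt : r < 1 := by
    rw [div_lt_one hp0]; linarith
  set R : ℝ≥0∞ := ENNReal.ofReal r with hR_def
  -- the one-step cylinder recursion
  have cyl_succ : ∀ (m : ℕ) (w : Fin (m+2) → Fin (n+1)),
      P (cyl X n (m+1) w) = P (cyl X n m (Fin.init w)) *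
        ENNReal.ofReal (trans (w (Fin.castSucc (Fin.last m))) (w (Fin.last (m+1)))) := by
    intro m w
    have h := hmarkov m (ext n (m+1) w)
    have hset : {ω | ∀ j ≤ m, X j ω = ext n (m+1) w j} = cyl X n m (Fin.init w) := by
      ext ω
      simp only [Set.mem_setOf_eq, cyl]
      refine forall_congr' fun j => forall_congr' fun hj => ?_
      have h1 : ext n (m+1) w j = w ⟨j, by omega⟩ := ext_eq n (m+1) w j (by omega)
      have h2 : ext n m (Fin.init w) j = Fin.init w ⟨j, by omega⟩ :=
        ext_eq n m _ j (by omega)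
      rw [h1, h2]
      simp [Fin.init, Fin.castSucc, Fin.castAdd, Fin.castLE]
    have hm1 : ext n (m+1) w m = (w (Fin.castSucc (Fin.last m)) : ℕ) := by
      rw [ext_eq n (m+1) w m (by omega)]
      rfl
    have hm2 : ext n (m+1) w (m+1) = (w (Fin.last (m+1)) : ℕ) := by
      rw [ext_eq n (m+1) w (m+1) (by omega)]
      rfl
    calc P (cyl X n (m+1) w) = P {ω | ∀ j ≤ m + 1, X j ω = ext n (m+1) w j} := rfl
      _ = P {ω | ∀ j ≤ m, X j ω = ext n (m+1) w j} *
            ENNReal.ofReal (trans (ext n (m+1) w m) (ext n (m+1) w (m+1))) := h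
      _ = _ := by rw [hset, hm1, hm2]
  -- basic facts about r
  set C : ℝ≥0∞ := ENNReal.ofReal (r^(n-1) - r^n) with hC_def
  have hrpow : r^n ≤ r^(n-1) := pow_le_pow_of_le_one hr0 hrlt.le (by omega)
  have hCsub0 : (0:ℝ) ≤ r^(n-1) - r^n := by linarith
  -- the inner one-step sum bound
  have hinner : ∀ k : Fin (n+1),
      ∑ l : Fin (n+1), R ^ (l:ℕ) * ENNReal.ofReal (trans (k:ℕ) (l:ℕ))
        ≤ R ^ (k:ℕ) + (if (k:ℕ) = n then C else 0) := by
    intro k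
    have hkn : (k:ℕ) ≤ n := Nat.lt_succ_iff.mp k.isLt
    by_cases hk0 : (k:ℕ) = 0
    · have hsum : ∑ l : Fin (n+1), R ^ (l:ℕ) * ENNReal.ofReal (trans (k:ℕ) (l:ℕ))
          = R ^ ((⟨0, by omega⟩ : Fin (n+1)):ℕ) * ENNReal.ofReal (trans (k:ℕ) (((⟨0, by omega⟩ : Fin (n+1))):ℕ)) := by
        apply Fintype.sum_eq_single
        intro l hl
        have hl0 : (l:ℕ) ≠ 0 := fun h => hl (Fin.ext (by simpa using h))
        rw [htranszero (k:ℕ) (l:ℕ) hkn (Nat.lt_succ_iff.mp l.isLt) (by omega) (by omega) (by omega)]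
        simp
      rw [hsum]
      simp only [hk0]
      rw [htrans00]
      simp only [ENNReal.ofReal_one, mul_one, pow_zero]
      exact le_self_add
    · by_cases hkn2 : (k:ℕ) = n
      · have hsum : ∑ l : Fin (n+1), R ^ (l:ℕ) * ENNReal.ofReal (trans (k:ℕ) (l:ℕ))
            = R ^ ((⟨n-1, by omega⟩ : Fin (n+1)):ℕ) * ENNReal.ofReal (trans (k:ℕ) (((⟨n-1, by omega⟩ : Fin (n+1))):ℕ)) := by
          apply Fintype.sum_eq_single
          intro l hl
          have hl0 : (l:ℕ) ≠ n - 1 := fun h => hl (Fin.ext (by simpa using h))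
          rw [htranszero (k:ℕ) (l:ℕ) hkn (Nat.lt_succ_iff.mp l.isLt) (by omega) (by omega) (by omega)]
          simp
        rw [hsum]
        simp only [hkn2]
        rw [htransn]
        simp only [ENNReal.ofReal_one, mul_one]
        simp only [if_true]
        rw [hC_def, hR_def, ← ENNReal.ofReal_pow hr0, ← ENNReal.ofReal_pow hr0,
          ← ENNReal.ofReal_add (by positivity) hCsub0]
        exact ENNReal.ofReal_le_ofReal (by linarith)
      · -- interior case
        have hk1 : 1 ≤ (k:ℕ) := by omega
        have hkn' : (k:ℕ) < n := by omega
        set l1 : Fin (n+1) := ⟨(k:ℕ)+1, by omega⟩ with hl1_def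
        set l2 : Fin (n+1) := ⟨(k:ℕ)-1, by omega⟩ with hl2_def
        have hne : l1 ≠ l2 := by
          rw [hl1_def, hl2_def, Ne, Fin.ext_iff]
          simp only []
          omega
        have hpair : ∑ l : Fin (n+1), R ^ (l:ℕ) * ENNReal.ofReal (trans (k:ℕ) (l:ℕ))
            = ∑ l ∈ ({l1, l2} : Finset (Fin (n+1))), R ^ (l:ℕ) * ENNReal.ofReal (trans (k:ℕ) (l:ℕ)) := by
          refine (Finset.sum_subset (Finset.subset_univ _) ?_).symm
          intro l _ hl
          simp only [Finset.mem_insert, Finset.mem_singleton] at hl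
          push_neg at hl
          have hne1 : (l:ℕ) ≠ (k:ℕ)+1 := fun h => hl.1 (Fin.ext (by simpa [hl1_def] using h))
          have hne2 : (l:ℕ) ≠ (k:ℕ)-1 := fun h => hl.2 (Fin.ext (by simpa [hl2_def] using h))
          rw [htranszero (k:ℕ) (l:ℕ) hkn (Nat.lt_succ_iff.mp l.isLt) (by omega) (by omega) (by omega)]
          simp
        rw [hpair, Finset.sum_pair hne]
        have hv1 : (l1:ℕ) = (k:ℕ)+1 := rfl
        have hv2 : (l2:ℕ) = (k:ℕ)-1 := rfl
        rw [hv1, hv2, htransup (k:ℕ) hk1 hkn', htransdown (k:ℕ) hk1 hkn']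
        have hid : r^((k:ℕ)+1) * p + r^((k:ℕ)-1) * (1-p) = r^(k:ℕ) := by
          obtain ⟨d, hd⟩ : ∃ d, (k:ℕ) = d + 1 := ⟨(k:ℕ)-1, by omega⟩
          rw [hd]
          simp only [Nat.add_sub_cancel]
          have hbase : r^2 * p + (1-p) = r := by
            rw [hr_def]; field_simp; ring
          calc r^(d+1+1)*p + r^d*(1-p) = r^d * (r^2*p + (1-p)) := by ring
            _ = r^d * r := by rw [hbase]
            _ = r^(d+1) := by ring
        have heq : R ^ ((k:ℕ)+1) * ENNReal.ofReal p + R ^ ((k:ℕ)-1) * ENNReal.ofReal (1-p)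
            = R ^ (k:ℕ) := by
          rw [hR_def, ← ENNReal.ofReal_pow hr0, ← ENNReal.ofReal_pow hr0, ← ENNReal.ofReal_pow hr0,
            ← ENNReal.ofReal_mul (by positivity), ← ENNReal.ofReal_mul (by positivity),
            ← ENNReal.ofReal_add (by positivity) (mul_nonneg (pow_nonneg hr0 _) (by linarith)), hid]
        rw [heq]
        exact le_self_add
  -- the expectation of r^(X m) via cylinders
  set A : ℕ → ℝ≥0∞ := fun m => ∑ v : Fin (m+1) → Fin (n+1),
      R ^ ((v (Fin.last m) : ℕ)) * P (cyl X n m v) with hA_def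
  have hA0 : A 0 = R ^ n := by
    have hcyl0 : ∀ v : Fin 1 → Fin (n+1), cyl X n 0 v = {ω : Ω | n = ((v 0 : ℕ))} := by
      intro v
      have hext0 : ext n 0 v 0 = ((v 0 : ℕ)) := by
        rw [ext_eq n 0 v 0 (by omega)]
        exact congrArg Fin.val (congrArg v (Subsingleton.elim _ _))
      ext ω
      simp only [cyl, Set.mem_setOf_eq]
      constructor
      · intro h
        have h0 := h 0 le_rfl
        rw [hext0] at h0
        rw [← h0, hstart ω]
      · intro h j hj
        have hj0 : j = 0 := by omega
        subst hj0
        rw [hext0, hstart ω]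
        exact h
    simp only [hA_def]
    have hzero : ∀ v : Fin 1 → Fin (n+1), v ≠ (fun _ => (⟨n, by omega⟩ : Fin (n+1))) →
        R ^ ((v (Fin.last 0) : ℕ)) * P (cyl X n 0 v) = 0 := by
      intro v hv
      have hvn : ((v 0 : ℕ)) ≠ n := by
        intro h
        apply hv
        funext j
        have hj : j = 0 := Subsingleton.elim _ _
        rw [hj]
        exact Fin.ext (by simpa using h)
      rw [hcyl0]
      have hem : {ω : Ω | n = ((v 0 : ℕ))} = ∅ := by
        ext ω; simp only [Set.mem_setOf_eq, Set.mem_empty_iff_false, iff_false]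
        exact fun h => hvn h.symm
      rw [hem, measure_empty, mul_zero]
    rw [Fintype.sum_eq_single _ hzero, hcyl0]
    simp
  have htotal : ∀ m, ∑ v : Fin (m+1) → Fin (n+1), P (cyl X n m v) = 1 :=
    fun m => total P X hX n hrange m
  have hstep : ∀ m, A (m+1) ≤ A m + C := by
    intro m
    have hre : A (m+1) = ∑ v : Fin (m+1) → Fin (n+1), P (cyl X n m v) *
        (∑ a : Fin (n+1), R ^ (a:ℕ) * ENNReal.ofReal (trans ((v (Fin.last m)):ℕ) (a:ℕ))) := by
      simp only [hA_def]
      rw [← Equiv.sum_comp (Fin.snocEquiv (fun _ : Fin (m+2) => Fin (n+1)))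
        (fun w => R ^ ((w (Fin.last (m+1)) : ℕ)) * P (cyl X n (m+1) w))]
      rw [Fintype.sum_prod_type]
      rw [Finset.sum_comm]
      apply Finset.sum_congr rfl
      intro v _
      rw [Finset.mul_sum]
      apply Finset.sum_congr rfl
      intro a _
      have hsnoc : ((Fin.snocEquiv (fun _ : Fin (m+2) => Fin (n+1))) (a, v)) = Fin.snoc v a := by
        funext j
        simp [Fin.snocEquiv]
      rw [hsnoc]
      rw [cyl_succ m (Fin.snoc v a)]
      rw [Fin.snoc_last, Fin.snoc_castSucc, Fin.init_snoc]
      ring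
    rw [hre]
    calc ∑ v : Fin (m+1) → Fin (n+1), P (cyl X n m v) *
          (∑ a : Fin (n+1), R ^ (a:ℕ) * ENNReal.ofReal (trans ((v (Fin.last m)):ℕ) (a:ℕ)))
        ≤ ∑ v : Fin (m+1) → Fin (n+1), P (cyl X n m v) *
          (R ^ ((v (Fin.last m)):ℕ) + (if ((v (Fin.last m)):ℕ) = n then C else 0)) := by
          exact Finset.sum_le_sum (fun v _ => mul_le_mul_right (hinner (v (Fin.last m))) _)
      _ = (∑ v : Fin (m+1) → Fin (n+1), R ^ ((v (Fin.last m)):ℕ) * P (cyl X n m v))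
          + ∑ v : Fin (m+1) → Fin (n+1), P (cyl X n m v) *
            (if ((v (Fin.last m)):ℕ) = n then C else 0) := by
          rw [← Finset.sum_add_distrib]
          apply Finset.sum_congr rfl
          intro v _
          rw [mul_add, mul_comm]
      _ ≤ A m + C := by
          apply add_le_add
          · simp only [hA_def]
            exact le_rfl
          · calc ∑ v : Fin (m+1) → Fin (n+1), P (cyl X n m v) *
                (if ((v (Fin.last m)):ℕ) = n then C else 0)
                ≤ ∑ v : Fin (m+1) → Fin (n+1), P (cyl X n m v) * C := by
                  apply Finset.sum_le_sum
                  intro v _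
                  apply mul_le_mul_right
                  split_ifs
                  · exact le_rfl
                  · exact zero_le
              _ = C := by rw [← Finset.sum_mul, htotal m, one_mul]
  have hAle : ∀ m, A m ≤ R^n + m * C := by
    intro m
    induction m with
    | zero => rw [hA0]; simp
    | succ m ih =>
      calc A (m+1) ≤ A m + C := hstep m
        _ ≤ (R^n + m * C) + C := add_le_add_left ih C
        _ = R^n + (m+1 : ℕ) * C := by
            rw [Nat.cast_succ, add_mul, one_mul, add_assoc]
  classical
  -- the key bound on each absorption probability
  have key : ∀ m : ℕ, (P {ω | X m ω = 0}).toReal ≤ (m:ℝ) * r^(n-1) := by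
    intro m
    set S0 : ℝ≥0∞ := ∑ v ∈ Finset.univ.filter
        (fun v : Fin (m+1) → Fin (n+1) => ((v (Fin.last m) : ℕ)) = 0), P (cyl X n m v) with hS0_def
    set S1 : ℝ≥0∞ := ∑ v ∈ Finset.univ.filter
        (fun v : Fin (m+1) → Fin (n+1) => ¬ ((v (Fin.last m) : ℕ)) = 0), P (cyl X n m v) with hS1_def
    have hsplit : S0 + S1 = 1 := by
      rw [hS0_def, hS1_def, Finset.sum_filter_add_sum_filter_not]
      exact htotal m
    have hextm : ∀ (v : Fin (m+1) → Fin (n+1)) (ω : Ω), ω ∈ cyl X n m v →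
        X m ω = ((v (Fin.last m) : ℕ)) := by
      intro v ω hω
      have h := hω m le_rfl
      rw [ext_eq n m v m (by omega)] at h
      exact h
    have hb : P {ω | X m ω = 0} = S0 := by
      rw [partition P X hX n hrange m _ (show MeasurableSet {ω : Ω | X m ω = 0} from (hX m) (measurableSet_singleton 0))]
      rw [hS0_def, Finset.sum_filter]
      apply Finset.sum_congr rfl
      intro v _
      by_cases hv : ((v (Fin.last m) : ℕ)) = 0
      · rw [if_pos hv]
        congr 1
        apply Set.inter_eq_self_of_subset_right
        intro ω hω
        show X m ω = 0
        rw [hextm v ω hω, hv]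
      · rw [if_neg hv]
        have hem : {ω | X m ω = 0} ∩ cyl X n m v = ∅ := by
          rw [Set.eq_empty_iff_forall_notMem]
          rintro ω ⟨h0, hc⟩
          apply hv
          rw [← hextm v ω hc]
          exact h0
        rw [hem, measure_empty]
    have hlow : S0 + R^n * S1 ≤ A m := by
      have hsum_eq : ∑ v : Fin (m+1) → Fin (n+1),
          (if ((v (Fin.last m) : ℕ)) = 0 then (1:ℝ≥0∞) else R^n) * P (cyl X n m v)
            = S0 + R^n * S1 := by
        rw [hS0_def, hS1_def, Finset.mul_sum]
        rw [← Finset.sum_filter_add_sum_filter_not Finset.univ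
          (fun v : Fin (m+1) → Fin (n+1) => ((v (Fin.last m) : ℕ)) = 0)]
        congr 1
        · apply Finset.sum_congr rfl
          intro v hv
          rw [Finset.mem_filter] at hv
          rw [if_pos hv.2, one_mul]
        · apply Finset.sum_congr rfl
          intro v hv
          rw [Finset.mem_filter] at hv
          rw [if_neg hv.2]
      rw [← hsum_eq]
      simp only [hA_def]
      apply Finset.sum_le_sum
      intro v _
      apply mul_le_mul_left
      split_ifs with h
      · rw [h, pow_zero]
      · rw [hR_def, ← ENNReal.ofReal_pow hr0, ← ENNReal.ofReal_pow hr0]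
        exact ENNReal.ofReal_le_ofReal
          (pow_le_pow_of_le_one hr0 hrlt.le (Nat.lt_succ_iff.mp (v (Fin.last m)).isLt))
    -- pass to the reals
    have hm0 : (0:ℝ) ≤ (m:ℝ) * r^(n-1) := mul_nonneg (Nat.cast_nonneg m) (pow_nonneg hr0 _)
    have hAofReal : A m ≤ ENNReal.ofReal (r^n + (m:ℝ) * (r^(n-1) - r^n)) := by
      refine (hAle m).trans (le_of_eq ?_)
      rw [ENNReal.ofReal_add (pow_nonneg hr0 n) (mul_nonneg (Nat.cast_nonneg m) hCsub0),
        ENNReal.ofReal_mul (Nat.cast_nonneg m), hR_def, ← ENNReal.ofReal_pow hr0,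
        ENNReal.ofReal_natCast, hC_def]
    have hAfin : A m ≠ ⊤ := ne_top_of_le_ne_top ENNReal.ofReal_ne_top hAofReal
    have hS0fin : S0 ≠ ⊤ := by
      intro h
      rw [h] at hsplit
      simp at hsplit
    have hS1fin : S1 ≠ ⊤ := by
      intro h
      rw [h] at hsplit
      simp at hsplit
    have hRnfin : R^n ≠ ⊤ := by
      rw [hR_def, ← ENNReal.ofReal_pow hr0]
      exact ENNReal.ofReal_ne_top
    have F1 : (A m).toReal ≤ r^n + (m:ℝ) * (r^(n-1) - r^n) :=
      ENNReal.toReal_le_of_le_ofReal (by nlinarith [pow_nonneg hr0 n]) hAofReal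
    have F2 : S0.toReal + r^n * S1.toReal ≤ (A m).toReal := by
      have h := ENNReal.toReal_mono hAfin hlow
      rw [ENNReal.toReal_add hS0fin (ENNReal.mul_ne_top hRnfin hS1fin),
        ENNReal.toReal_mul, ENNReal.toReal_pow, hR_def, ENNReal.toReal_ofReal hr0] at h
      exact h
    have F3 : S0.toReal + S1.toReal = 1 := by
      have h := congrArg ENNReal.toReal hsplit
      rwa [ENNReal.toReal_add hS0fin hS1fin, ENNReal.toReal_one] at h
    rw [hb]
    set x := S0.toReal with hx_def
    set y := S1.toReal with hy_def
    have hx0 : (0:ℝ) ≤ x := ENNReal.toReal_nonneg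
    have hy0 : (0:ℝ) ≤ y := ENNReal.toReal_nonneg
    have hrn_le : r^n ≤ r := by
      have := pow_le_pow_of_le_one hr0 hrlt.le hn
      simpa using this
    have hfac : r^(n-1) - r^n = r^(n-1) * (1-r) := by
      have hh : r^n = r^(n-1) * r := by
        rw [← pow_succ]
        congr 1
        omega
      rw [hh]; ring
    have hy' : y = 1 - x := by linarith
    have hc1 : x * (1 - r^n) ≤ (m:ℝ) * (r^(n-1) - r^n) := by
      have h := F2.trans F1
      rw [hy'] at h
      nlinarith [h]
    have h2 : (m:ℝ) * (r^(n-1) - r^n) ≤ ((m:ℝ) * r^(n-1)) * (1 - r^n) := by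
      rw [hfac]
      have hle : (1 - r) ≤ (1 - r^n) := by linarith
      calc (m:ℝ) * (r^(n-1)*(1-r)) = ((m:ℝ)*r^(n-1)) * (1-r) := by ring
        _ ≤ _ := mul_le_mul_of_nonneg_left hle hm0
    have h1rn : (0:ℝ) < 1 - r^n := by linarith
    exact le_of_mul_le_mul_right (by linarith) h1rn
  -- absorption: once at 0, the chain stays at 0 almost surely
  have hnull : ∀ m : ℕ, P ({ω | X m ω = 0} \ {ω | X (m+1) ω = 0}) = 0 := by
    intro m
    have hmeas : MeasurableSet ({ω : Ω | X m ω = 0} \ {ω | X (m+1) ω = 0}) :=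
      ((hX m) (measurableSet_singleton 0)).diff ((hX (m+1)) (measurableSet_singleton 0))
    rw [partition P X hX n hrange (m+1) _ hmeas]
    apply Finset.sum_eq_zero
    intro w _
    by_cases hw : ((w (Fin.castSucc (Fin.last m)) : ℕ)) = 0 ∧ ((w (Fin.last (m+1)) : ℕ)) ≠ 0
    · refine le_antisymm ?_ zero_le
      calc P (({ω | X m ω = 0} \ {ω | X (m+1) ω = 0}) ∩ cyl X n (m+1) w)
          ≤ P (cyl X n (m+1) w) := measure_mono Set.inter_subset_right
        _ = P (cyl X n m (Fin.init w)) *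
            ENNReal.ofReal (trans 0 ((w (Fin.last (m+1)) : ℕ))) := by
            rw [cyl_succ m w, hw.1]
        _ = 0 := by
            rw [htranszero 0 _ (by omega) (Nat.lt_succ_iff.mp (w (Fin.last (m+1))).isLt)
              (fun h => hw.2 h.2) (by omega) (by omega)]
            simp
    · have hem : ({ω | X m ω = 0} \ {ω | X (m+1) ω = 0}) ∩ cyl X n (m+1) w = ∅ := by
        rw [Set.eq_empty_iff_forall_notMem]
        rintro ω ⟨hN, hc⟩
        apply hw
        have h1 := hc m (by omega)
        have h2 := hc (m+1) le_rfl
        rw [ext_eq n (m+1) w m (by omega)] at h1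
        rw [ext_eq n (m+1) w (m+1) (by omega)] at h2
        constructor
        · rw [show ((⟨m, by omega⟩ : Fin (m+2))) = Fin.castSucc (Fin.last m) from rfl] at h1
          rw [← h1]
          exact hN.1
        · rw [show ((⟨m+1, by omega⟩ : Fin (m+2))) = Fin.last (m+1) from rfl] at h2
          rw [← h2]
          exact hN.2
      rw [hem, measure_empty]
  -- a path that has hit 0 either stays there or crosses an exceptional null set
  have habs : ∀ (ω : Ω) (j t : ℕ), j ≤ t → X j ω = 0 →
      X t ω = 0 ∨ ∃ s, s < t ∧ ω ∈ ({ω | X s ω = 0} \ {ω | X (s+1) ω = 0}) := by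
    intro ω j t
    induction t with
    | zero =>
      intro hj h0
      left
      have hj0 : j = 0 := by omega
      rw [hj0] at h0
      exact h0
    | succ t ih =>
      intro hj h0
      by_cases hjt : j ≤ t
      · rcases ih hjt h0 with h | ⟨s, hs, hmem⟩
        · by_cases ht1 : X (t+1) ω = 0
          · left; exact ht1
          · right; exact ⟨t, by omega, ⟨h, ht1⟩⟩
        · right; exact ⟨s, by omega, hmem⟩
      · have hjt1 : j = t+1 := by omega
        left
        rwa [← hjt1]
  -- conclusion
  cases i with
  | zero =>
    have hem : {ω : Ω | ∃ j < 0, X j ω = 0} = ∅ := by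
      ext ω; simp
    rw [hem, measure_empty]
    simp
  | succ m =>
    set Nset : Set Ω := ⋃ s ∈ Set.Iio m, ({ω | X s ω = 0} \ {ω | X (s+1) ω = 0}) with hN_def
    have hNnull : P Nset = 0 := by
      rw [hN_def]
      refine measure_iUnion_null fun s => measure_iUnion_null fun _ => hnull s
    have hsub : {ω | ∃ j < m+1, X j ω = 0} ⊆ {ω | X m ω = 0} ∪ Nset := by
      rintro ω ⟨j, hj, h0⟩
      rcases habs ω j m (by omega) h0 with h | ⟨s, hs, hmem⟩
      · left; exact h
      · right
        exact Set.mem_biUnion hs hmem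
    have hle : P {ω | ∃ j < m+1, X j ω = 0} ≤ P {ω | X m ω = 0} := by
      calc P {ω | ∃ j < m+1, X j ω = 0} ≤ P ({ω | X m ω = 0} ∪ Nset) := measure_mono hsub
        _ ≤ P {ω | X m ω = 0} + P Nset := measure_union_le _ _
        _ = P {ω | X m ω = 0} := by rw [hNnull, add_zero]
    have hfin : P {ω | X m ω = 0} ≠ ⊤ := measure_ne_top P _
    have hfinal := (ENNReal.toReal_mono hfin hle).trans (key m)
    simpa using hfinal
end

section
/- Suppose the rates of a random walk on [−b_n, b_n] ∩ ℤ satisfy log(λ_k/μ_{k+1}) = −k/σ_n² + δ_n(k) for |k| ≤ a_n, with Σ_{k=−a_n}^{a_n} |δ_n(k)| ≤ K·a_n/σ_n². Then the stationary distribution satisfies, for all −a_n ≤ k ≤ a_n, π(0)·exp(−k²/(2σ_n²))·e^{−(K+1)a_n/σ_n²} ≤ π(k) ≤ π(0)·exp(−k²/(2σ_n²))·e^{(K+1)a_n/σ_n²}. -/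
open Finset

private lemma sumtop8 (f : ℤ → ℝ) (c d : ℤ) (h : c ≤ d) :
    ∑ j ∈ Ico c (d+1), f j = (∑ j ∈ Ico c d, f j) + f d := by
  have : Ico c (d+1) = insert d (Ico c d) := by
    ext x; simp only [Finset.mem_Ico, Finset.mem_insert]; omega
  rw [this, Finset.sum_insert (by simp)]; ring

private lemma sumbot8 (f : ℤ → ℝ) (c d : ℤ) (h : c < d) :
    ∑ j ∈ Ico c d, f j = f c + ∑ j ∈ Ico (c+1) d, f j := by
  have : Ico c d = insert c (Ico (c+1) d) := by
    ext x; simp only [Finset.mem_Ico, Finset.mem_insert]; omega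
  rw [this, Finset.sum_insert (by simp)]

/-- If the rates of a birth-death chain on `[−b,b] ∩ ℤ` satisfy
`log(λ_k/μ_{k+1}) = −k/σ² + δ(k)` for `|k| ≤ a` with `Σ_{|k|≤a} |δ(k)| ≤ K·a/σ²`,
then its stationary distribution (characterized by detailed balance) satisfies,
for all `|k| ≤ a`,
`π(0)·e^{−k²/(2σ²)}·e^{−(K+1)a/σ²} ≤ π(k) ≤ π(0)·e^{−k²/(2σ²)}·e^{(K+1)a/σ²}`. -/
theorem stmt_8 (a b : ℕ) (hab : a + 1 ≤ b) (σ K : ℝ) (hσ : 0 < σ) (hK : 0 ≤ K)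
    (lam mu pstat : ℤ → ℝ) (δ : ℤ → ℝ)
    (hlam : ∀ k : ℤ, -b ≤ k → k < b → 0 < lam k)
    (hmu : ∀ k : ℤ, -b < k → k ≤ b → 0 < mu k)
    (hps_nonneg : ∀ k, 0 ≤ pstat k)
    (hps_supp : ∀ k : ℤ, k < -b ∨ (b : ℤ) < k → pstat k = 0)
    (hps_sum : ∑ k ∈ Icc (-b : ℤ) b, pstat k = 1)
    (hdb : ∀ k : ℤ, -b ≤ k → k < b → pstat (k + 1) * mu (k + 1) = pstat k * lam k)
    (hdrift : ∀ k : ℤ, -a ≤ k → k ≤ a →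
      Real.log (lam k / mu (k + 1)) = -(k : ℝ) / σ ^ 2 + δ k)
    (hδ : ∑ k ∈ Icc (-a : ℤ) a, |δ k| ≤ K * a / σ ^ 2) :
    ∀ k : ℤ, -a ≤ k → k ≤ a →
      pstat 0 * Real.exp (-(k : ℝ) ^ 2 / (2 * σ ^ 2)) * Real.exp (-(K + 1) * a / σ ^ 2)
          ≤ pstat k ∧
      pstat k ≤
        pstat 0 * Real.exp (-(k : ℝ) ^ 2 / (2 * σ ^ 2)) * Real.exp ((K + 1) * a / σ ^ 2) := by
  have hσ2 : (0:ℝ) < σ^2 := by positivity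
  have hσ' : σ ≠ 0 := ne_of_gt hσ
  -- pstat 0 ≠ 0
  have hz : pstat 0 ≠ 0 := by
    intro h0
    have hall : ∀ k : ℤ, -b ≤ k → k ≤ b → pstat k = 0 := by
      intro k
      induction k using Int.induction_on with
      | zero => intro _ _; exact h0
      | succ i ih =>
        intro h1 h2
        have hmui : 0 < mu ((i:ℤ)+1) := hmu _ (by omega) h2
        have hdb' := hdb i (by omega) (by omega)
        have hzi : pstat i = 0 := ih (by omega) (by omega)
        rw [hzi, zero_mul] at hdb'
        exact (mul_eq_zero.mp hdb').resolve_right (ne_of_gt hmui)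
      | pred i ih =>
        intro h1 h2
        have hlami : 0 < lam (-(i:ℤ)-1) := hlam _ (by omega) (by omega)
        have hdb' := hdb (-(i:ℤ)-1) (by omega) (by omega)
        have e1 : (-(i:ℤ)-1) + 1 = -(i:ℤ) := by ring
        rw [e1] at hdb'
        have hzi : pstat (-(i:ℤ)) = 0 := ih (by omega) (by omega)
        rw [hzi, zero_mul] at hdb'
        exact (mul_eq_zero.mp hdb'.symm).resolve_right (ne_of_gt hlami)
    have hsum0 : ∑ k ∈ Icc (-b:ℤ) b, pstat k = 0 :=
      Finset.sum_eq_zero (fun k hk => by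
        rw [Finset.mem_Icc] at hk; exact hall k hk.1 hk.2)
    rw [hsum0] at hps_sum
    norm_num at hps_sum
  have hp0 : 0 < pstat 0 := lt_of_le_of_ne (hps_nonneg 0) (Ne.symm hz)
  -- positivity on [-b, b]
  have hpos : ∀ k : ℤ, -b ≤ k → k ≤ b → 0 < pstat k := by
    intro k
    induction k using Int.induction_on with
    | zero => intro _ _; exact hp0
    | succ i ih =>
      intro h1 h2
      have hmui : 0 < mu ((i:ℤ)+1) := hmu _ (by omega) h2
      have hlami : 0 < lam (i:ℤ) := hlam _ (by omega) (by omega)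
      have hdb' := hdb i (by omega) (by omega)
      have hpi : 0 < pstat i := ih (by omega) (by omega)
      nlinarith [mul_pos hpi hlami, hmui, hps_nonneg ((i:ℤ)+1)]
    | pred i ih =>
      intro h1 h2
      have hmui : 0 < mu (-(i:ℤ)) := hmu _ (by omega) (by omega)
      have hlami : 0 < lam (-(i:ℤ)-1) := hlam _ (by omega) (by omega)
      have hdb' := hdb (-(i:ℤ)-1) (by omega) (by omega)
      have e1 : (-(i:ℤ)-1) + 1 = -(i:ℤ) := by ring
      rw [e1] at hdb'
      have hpi : 0 < pstat (-(i:ℤ)) := ih (by omega) (by omega)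
      nlinarith [mul_pos hpi hmui, hlami, hps_nonneg (-(i:ℤ)-1)]
  -- main formula for log pstat
  have hC : ∀ k : ℤ, -a ≤ k → k ≤ a →
      Real.log (pstat k) = Real.log (pstat 0) - ((k:ℝ)^2 - k)/(2*σ^2)
        + ((∑ j ∈ Ico (0:ℤ) k, δ j) - (∑ j ∈ Ico k 0, δ j)) := by
    intro k
    induction k using Int.induction_on with
    | zero => intro _ _; simp
    | succ i ih =>
      intro h1 h2
      have hmui : 0 < mu ((i:ℤ)+1) := hmu _ (by omega) (by omega)
      have hlami : 0 < lam (i:ℤ) := hlam _ (by omega) (by omega)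
      have hpi : 0 < pstat i := hpos i (by omega) (by omega)
      have hdb' := hdb i (by omega) (by omega)
      have hratio : pstat ((i:ℤ)+1) = pstat i * (lam i / mu ((i:ℤ)+1)) := by
        field_simp
        linarith [hdb']
      rw [hratio, Real.log_mul (ne_of_gt hpi) (ne_of_gt (div_pos hlami hmui)),
        hdrift i (by omega) (by omega), ih (by omega) (by omega),
        sumtop8 δ 0 i (by positivity),
        Finset.Ico_eq_empty (show ¬ ((i:ℤ) < 0) by omega),
        Finset.Ico_eq_empty (show ¬ ((i:ℤ)+1 < 0) by omega)]
      push_cast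
      field_simp
      ring
    | pred i ih =>
      intro h1 h2
      have hmui : 0 < mu (-(i:ℤ)) := hmu _ (by omega) (by omega)
      have hlami : 0 < lam (-(i:ℤ)-1) := hlam _ (by omega) (by omega)
      have hpi : 0 < pstat (-(i:ℤ)) := hpos _ (by omega) (by omega)
      have hdb' := hdb (-(i:ℤ)-1) (by omega) (by omega)
      have e1 : (-(i:ℤ)-1) + 1 = -(i:ℤ) := by ring
      rw [e1] at hdb'
      have hratio : pstat (-(i:ℤ)-1) = pstat (-(i:ℤ)) * (mu (-(i:ℤ)) / lam (-(i:ℤ)-1)) := by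
        field_simp
        linarith [hdb']
      have hd := hdrift (-(i:ℤ)-1) (by omega) (by omega)
      rw [e1] at hd
      have hlog : Real.log (mu (-(i:ℤ)) / lam (-(i:ℤ)-1))
          = -Real.log (lam (-(i:ℤ)-1) / mu (-(i:ℤ))) := by
        rw [Real.log_div (ne_of_gt hmui) (ne_of_gt hlami),
          Real.log_div (ne_of_gt hlami) (ne_of_gt hmui)]
        ring
      rw [hratio, Real.log_mul (ne_of_gt hpi) (ne_of_gt (div_pos hmui hlami)),
        hlog, hd, ih (by omega) (by omega),
        sumbot8 δ (-(i:ℤ)-1) 0 (by omega), e1,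
        Finset.Ico_eq_empty (show ¬ ((0:ℤ) < -(i:ℤ)-1) by omega),
        Finset.Ico_eq_empty (show ¬ ((0:ℤ) < -(i:ℤ)) by omega)]
      push_cast
      field_simp
      ring
    -- end hC
  -- bound on the δ-sums
  have hEbound : ∀ k : ℤ, -a ≤ k → k ≤ a →
      |(∑ j ∈ Ico (0:ℤ) k, δ j) - (∑ j ∈ Ico k 0, δ j)| ≤ K*a/σ^2 := by
    intro k h1 h2
    have habs : ∀ (c d : ℤ), -(a:ℤ) ≤ c → d ≤ (a:ℤ)+1 →
        |∑ j ∈ Ico c d, δ j| ≤ K*a/σ^2 := by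
      intro c d hc hd
      calc |∑ j ∈ Ico c d, δ j| ≤ ∑ j ∈ Ico c d, |δ j| := Finset.abs_sum_le_sum_abs _ _
        _ ≤ ∑ j ∈ Icc (-a:ℤ) a, |δ j| := by
            apply Finset.sum_le_sum_of_subset_of_nonneg
            · intro x hx
              simp only [Finset.mem_Ico] at hx
              simp only [Finset.mem_Icc]
              omega
            · intro _ _ _; exact abs_nonneg _
        _ ≤ K*a/σ^2 := hδ
    rcases le_or_gt 0 k with hk | hk
    · rw [Finset.Ico_eq_empty (show ¬ (k < 0) by omega), Finset.sum_empty, sub_zero]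
      exact habs 0 k (by omega) (by omega)
    · rw [Finset.Ico_eq_empty (show ¬ ((0:ℤ) < k) by omega), Finset.sum_empty, zero_sub,
        abs_neg]
      exact habs k 0 (by omega) (by omega)
  -- final assembly
  intro k hk1 hk2
  have hpk : 0 < pstat k := hpos k (by omega) (by omega)
  have hlogk := hC k hk1 hk2
  have hEb := hEbound k hk1 hk2
  rw [abs_le] at hEb
  have hka1 : -(a:ℝ) ≤ (k:ℝ) := by exact_mod_cast hk1
  have hka2 : (k:ℝ) ≤ a := by exact_mod_cast hk2
  set E : ℝ := (∑ j ∈ Ico (0:ℤ) k, δ j) - (∑ j ∈ Ico k 0, δ j) with hEdef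
  have key1 : Real.log (pstat 0) + (-(k:ℝ)^2/(2*σ^2) + (-(K+1)*a/σ^2))
      ≤ Real.log (pstat k) := by
    rw [hlogk]
    have e4 : (0:ℝ) ≤ ((k:ℝ) + 2*a)/(2*σ^2) := by
      apply div_nonneg _ (by positivity)
      have ha0 : (0:ℝ) ≤ (a:ℝ) := Nat.cast_nonneg a
      linarith [hka1]
    have h1 := hEb.1
    ring_nf at e4 h1 ⊢
    linarith [e4, h1]
  have key2 : Real.log (pstat k)
      ≤ Real.log (pstat 0) + (-(k:ℝ)^2/(2*σ^2) + ((K+1)*a/σ^2)) := by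
    rw [hlogk]
    have e4 : (0:ℝ) ≤ (2*a - (k:ℝ))/(2*σ^2) := by
      apply div_nonneg _ (by positivity)
      have ha0 : (0:ℝ) ≤ (a:ℝ) := Nat.cast_nonneg a
      linarith [hka2]
    have h1 := hEb.2
    ring_nf at e4 h1 ⊢
    linarith [e4, h1]
  constructor
  · calc pstat 0 * Real.exp (-(k:ℝ)^2/(2*σ^2)) * Real.exp (-(K+1)*a/σ^2)
        = Real.exp (Real.log (pstat 0) + (-(k:ℝ)^2/(2*σ^2) + (-(K+1)*a/σ^2))) := by
          rw [Real.exp_add, Real.exp_add, Real.exp_log hp0]; ring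
      _ ≤ Real.exp (Real.log (pstat k)) := Real.exp_le_exp.mpr key1
      _ = pstat k := Real.exp_log hpk
  · calc pstat k = Real.exp (Real.log (pstat k)) := (Real.exp_log hpk).symm
      _ ≤ Real.exp (Real.log (pstat 0) + (-(k:ℝ)^2/(2*σ^2) + ((K+1)*a/σ^2))) :=
          Real.exp_le_exp.mpr key2
      _ = pstat 0 * Real.exp (-(k:ℝ)^2/(2*σ^2)) * Real.exp ((K+1)*a/σ^2) := by
          rw [Real.exp_add, Real.exp_add, Real.exp_log hp0]; ring
end

section
/- Let W_t^1 and W_t^2 be two independent copies of a continuous-time random walk on {−a,...,a} with rates λ_k, μ_k, started at −a and a respectively. Suppose there exist d > 0 and a differentiable h: ℝ → ℝ with λ_k − μ_k = h(k) for all k and h'(x) ≤ −d on [−a, a]. Then the first meeting time T = inf{t : W_t^1 = W_t^2} satisfies P(T > t) ≤ 2a·e^{−dt}. -/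
open Finset

/-- Reindex a sum along an injective shift map, discarding terms that vanish. -/
lemma sum_shift_aux {f : ℤ × ℤ → ℝ} {A S : Finset (ℤ × ℤ)} (e : ℤ × ℤ → ℤ × ℤ)
    (he : Function.Injective e)
    (h1 : ∀ q ∈ A, e q ∉ S → f (e q) = 0)
    (h2 : ∀ q ∈ S, (∀ p ∈ A, e p ≠ q) → f q = 0) :
    ∑ q ∈ A, f (e q) = ∑ q ∈ S, f q := by
  rw [← Finset.sum_image (fun x _ y _ hxy => he hxy)]
  have step1 : ∑ q ∈ (A.image e) ∩ S, f q = ∑ q ∈ A.image e, f q := by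
    apply Finset.sum_subset (Finset.inter_subset_left)
    intro q hq hq'
    obtain ⟨p, hp, rfl⟩ := Finset.mem_image.mp hq
    exact h1 p hp (fun hS => hq' (Finset.mem_inter.mpr ⟨hq, hS⟩))
  have step2 : ∑ q ∈ (A.image e) ∩ S, f q = ∑ q ∈ S, f q := by
    apply Finset.sum_subset (Finset.inter_subset_right)
    intro q hq hq'
    apply h2 q hq
    intro p hp hpe
    exact hq' (Finset.mem_inter.mpr ⟨Finset.mem_image.mpr ⟨p, hp, hpe⟩, hq⟩)
  rw [← step1, step2]

/-- Two independent copies of a birth-death chain on `{−a,…,a}`, started at `−a` and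
`a`, whose speed `λ_k − μ_k = h(k)` comes from a differentiable `h` with `h' ≤ −d`
on `[−a,a]`: the first meeting time satisfies `P(T > t) ≤ 2a·e^{−dt}`.  The pair
process (coupled after meeting) is described by its time-marginals `p2` on ordered
pairs, solving the forward equation with the diagonal absorbing;
`P(T > t)` is the probability mass on the strictly ordered pairs. -/
theorem stmt_11 (a : ℕ) (ha : 1 ≤ a) (d : ℝ) (hd : 0 < d)
    (lam mu : ℤ → ℝ) (h : ℝ → ℝ) (p2 : ℝ → ℤ × ℤ → ℝ)
    (hlam_nonneg : ∀ k, 0 ≤ lam k) (hmu_nonneg : ∀ k, 0 ≤ mu k)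
    (hlam0 : ∀ k : ℤ, k < -a ∨ (a : ℤ) ≤ k → lam k = 0)
    (hmu0 : ∀ k : ℤ, k ≤ -a ∨ (a : ℤ) < k → mu k = 0)
    (hdiff : Differentiable ℝ h)
    (hh : ∀ k : ℤ, -a ≤ k → k ≤ a → lam k - mu k = h k)
    (hh' : ∀ x ∈ Set.Icc (-(a : ℝ)) a, deriv h x ≤ -d)
    (hp2_nonneg : ∀ t q, 0 ≤ p2 t q)
    (hp2_supp : ∀ t : ℝ, ∀ q : ℤ × ℤ,
      ¬(-(a : ℤ) ≤ q.1 ∧ q.1 ≤ q.2 ∧ q.2 ≤ a) → p2 t q = 0)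
    (hp2_sum : ∀ t : ℝ,
      ∑ q ∈ ((Icc (-a : ℤ) a) ×ˢ (Icc (-a : ℤ) a)).filter (fun q => q.1 ≤ q.2),
        p2 t q = 1)
    (hp2_init : ∀ q : ℤ × ℤ, p2 0 q = if q = (-(a : ℤ), (a : ℤ)) then 1 else 0)
    (hforward : ∀ t : ℝ, ∀ k l : ℤ, -a ≤ k → k < l → l ≤ a →
      HasDerivAt (fun s => p2 s (k, l))
        (lam (k - 1) * p2 t (k - 1, l)
          + (if k + 1 < l then mu (k + 1) * p2 t (k + 1, l) else 0)
          + (if k < l - 1 then lam (l - 1) * p2 t (k, l - 1) else 0)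
          + mu (l + 1) * p2 t (k, l + 1)
          - (lam k + mu k + lam l + mu l) * p2 t (k, l)) t) :
    ∀ t : ℝ, 0 ≤ t →
      ∑ q ∈ ((Icc (-a : ℤ) a) ×ˢ (Icc (-a : ℤ) a)).filter (fun q => q.1 < q.2),
          p2 t q
        ≤ 2 * a * Real.exp (-d * t) := by
  set S : Finset (ℤ × ℤ) :=
    ((Icc (-a : ℤ) a) ×ˢ (Icc (-a : ℤ) a)).filter (fun q => q.1 < q.2) with hS
  have hmem : ∀ q : ℤ × ℤ, q ∈ S ↔
      (-(a : ℤ) ≤ q.1 ∧ q.1 ≤ a) ∧ (-(a : ℤ) ≤ q.2 ∧ q.2 ≤ a) ∧ q.1 < q.2 := by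
    intro q
    simp [hS, Finset.mem_filter, Finset.mem_product, Finset.mem_Icc, and_assoc]
  -- the weighted mass
  set F : ℝ → ℝ := fun s => ∑ q ∈ S, ((q.2 - q.1 : ℤ) : ℝ) * p2 s q with hF
  -- derivative of F
  have hFderiv : ∀ t : ℝ,
      HasDerivAt F (∑ q ∈ S, (h q.2 - h q.1) * p2 t q) t := by
    intro t
    have h0 : HasDerivAt F (∑ q ∈ S, ((q.2 - q.1 : ℤ) : ℝ) *
        (lam (q.1 - 1) * p2 t (q.1 - 1, q.2)
          + (if q.1 + 1 < q.2 then mu (q.1 + 1) * p2 t (q.1 + 1, q.2) else 0)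
          + (if q.1 < q.2 - 1 then lam (q.2 - 1) * p2 t (q.1, q.2 - 1) else 0)
          + mu (q.2 + 1) * p2 t (q.1, q.2 + 1)
          - (lam q.1 + mu q.1 + lam q.2 + mu q.2) * p2 t q)) t := by
      apply HasDerivAt.fun_sum
      intro q hq
      rcases (hmem q).mp hq with ⟨⟨hk1, _⟩, ⟨_, hl2⟩, hkl⟩
      exact (hforward t q.1 q.2 hk1 hkl hl2).const_mul _
    convert h0 using 1
    -- the four shifted sums
    have A1 : ∑ q ∈ S, (((q.2 - (q.1 - 1) - 1 : ℤ) : ℝ) * lam (q.1 - 1) * p2 t (q.1 - 1, q.2))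
        = ∑ q ∈ S, ((q.2 - q.1 - 1 : ℤ) : ℝ) * lam q.1 * p2 t q := by
      apply sum_shift_aux (f := fun q => ((q.2 - q.1 - 1 : ℤ) : ℝ) * lam q.1 * p2 t q)
        (e := fun q => (q.1 - 1, q.2))
      · intro x y hxy
        simp only [Prod.mk.injEq] at hxy
        exact Prod.ext (by omega) hxy.2
      · intro q hq hq'
        rcases (hmem q).mp hq with ⟨⟨hk1, hk2⟩, ⟨hl1, hl2⟩, hkl⟩
        have : q.1 - 1 < -(a : ℤ) := by
          by_contra hc
          exact hq' ((hmem _).mpr ⟨⟨by omega, by omega⟩, ⟨hl1, hl2⟩, by omega⟩)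
        simp [hlam0 _ (Or.inl this)]
      · intro q hq hq'
        rcases (hmem q).mp hq with ⟨⟨hk1, hk2⟩, ⟨hl1, hl2⟩, hkl⟩
        by_cases hc : q.1 + 1 < q.2
        · exfalso
          exact hq' (q.1 + 1, q.2) ((hmem _).mpr ⟨⟨by omega, by omega⟩, ⟨hl1, hl2⟩, hc⟩)
            (Prod.ext (by simp) rfl)
        · have : q.2 - q.1 - 1 = 0 := by omega
          simp [this]
    have A2 : ∑ q ∈ S.filter (fun q => q.1 + 1 < q.2),
          (((q.2 - (q.1 + 1) + 1 : ℤ) : ℝ) * mu (q.1 + 1) * p2 t (q.1 + 1, q.2))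
        = ∑ q ∈ S, ((q.2 - q.1 + 1 : ℤ) : ℝ) * mu q.1 * p2 t q := by
      apply sum_shift_aux (f := fun q => ((q.2 - q.1 + 1 : ℤ) : ℝ) * mu q.1 * p2 t q)
        (e := fun q => (q.1 + 1, q.2))
      · intro x y hxy
        simp only [Prod.mk.injEq] at hxy
        exact Prod.ext (by omega) hxy.2
      · intro q hq hq'
        rcases Finset.mem_filter.mp hq with ⟨hq, hc⟩
        rcases (hmem q).mp hq with ⟨⟨hk1, hk2⟩, ⟨hl1, hl2⟩, hkl⟩
        exact absurd ((hmem (q.1 + 1, q.2)).mpr ⟨⟨by omega, by omega⟩, ⟨hl1, hl2⟩, hc⟩) hq'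
      · intro q hq hq'
        rcases (hmem q).mp hq with ⟨⟨hk1, hk2⟩, ⟨hl1, hl2⟩, hkl⟩
        by_cases hc : -(a : ℤ) ≤ q.1 - 1
        · exfalso
          refine hq' (q.1 - 1, q.2) (Finset.mem_filter.mpr
            ⟨(hmem _).mpr ⟨⟨hc, by omega⟩, ⟨hl1, hl2⟩, by omega⟩, by simpa using by omega⟩)
            (Prod.ext (by simp) rfl)
        · have : q.1 ≤ -(a : ℤ) := by omega
          simp [hmu0 _ (Or.inl this)]
    have A3 : ∑ q ∈ S.filter (fun q => q.1 < q.2 - 1),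
          (((q.2 - 1 - q.1 + 1 : ℤ) : ℝ) * lam (q.2 - 1) * p2 t (q.1, q.2 - 1))
        = ∑ q ∈ S, ((q.2 - q.1 + 1 : ℤ) : ℝ) * lam q.2 * p2 t q := by
      apply sum_shift_aux (f := fun q => ((q.2 - q.1 + 1 : ℤ) : ℝ) * lam q.2 * p2 t q)
        (e := fun q => (q.1, q.2 - 1))
      · intro x y hxy
        simp only [Prod.mk.injEq] at hxy
        exact Prod.ext hxy.1 (by omega)
      · intro q hq hq'
        rcases Finset.mem_filter.mp hq with ⟨hq, hc⟩
        rcases (hmem q).mp hq with ⟨⟨hk1, hk2⟩, ⟨hl1, hl2⟩, hkl⟩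
        exact absurd ((hmem (q.1, q.2 - 1)).mpr ⟨⟨hk1, hk2⟩, ⟨by omega, by omega⟩, hc⟩) hq'
      · intro q hq hq'
        rcases (hmem q).mp hq with ⟨⟨hk1, hk2⟩, ⟨hl1, hl2⟩, hkl⟩
        by_cases hc : q.2 + 1 ≤ (a : ℤ)
        · exfalso
          refine hq' (q.1, q.2 + 1) (Finset.mem_filter.mpr
            ⟨(hmem _).mpr ⟨⟨hk1, hk2⟩, ⟨by omega, hc⟩, by omega⟩, by simpa using by omega⟩)
            (Prod.ext rfl (by simp))
        · have : (a : ℤ) ≤ q.2 := by omega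
          simp [hlam0 _ (Or.inr this)]
    have A4 : ∑ q ∈ S, (((q.2 + 1 - q.1 - 1 : ℤ) : ℝ) * mu (q.2 + 1) * p2 t (q.1, q.2 + 1))
        = ∑ q ∈ S, ((q.2 - q.1 - 1 : ℤ) : ℝ) * mu q.2 * p2 t q := by
      apply sum_shift_aux (f := fun q => ((q.2 - q.1 - 1 : ℤ) : ℝ) * mu q.2 * p2 t q)
        (e := fun q => (q.1, q.2 + 1))
      · intro x y hxy
        simp only [Prod.mk.injEq] at hxy
        exact Prod.ext hxy.1 (by omega)
      · intro q hq hq'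
        rcases (hmem q).mp hq with ⟨⟨hk1, hk2⟩, ⟨hl1, hl2⟩, hkl⟩
        have hc : (a : ℤ) ≤ q.2 := by
          by_contra hc
          exact hq' ((hmem (q.1, q.2 + 1)).mpr ⟨⟨hk1, hk2⟩, ⟨by omega, by omega⟩, by omega⟩)
        have hz : p2 t (q.1, q.2 + 1) = 0 :=
          hp2_supp t (q.1, q.2 + 1) (by intro hcon; simp at hcon; omega)
        simp [hz]
      · intro q hq hq'
        rcases (hmem q).mp hq with ⟨⟨hk1, hk2⟩, ⟨hl1, hl2⟩, hkl⟩
        by_cases hc : q.1 < q.2 - 1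
        · exfalso
          exact hq' (q.1, q.2 - 1) ((hmem _).mpr ⟨⟨hk1, hk2⟩, ⟨by omega, by omega⟩, by omega⟩)
            (Prod.ext rfl (by simp))
        · have : q.2 - q.1 - 1 = 0 := by omega
          simp [this]
    calc ∑ q ∈ S, (h q.2 - h q.1) * p2 t q
        = ∑ q ∈ S, (((q.2 - q.1 - 1 : ℤ) : ℝ) * lam q.1 * p2 t q
            + ((q.2 - q.1 + 1 : ℤ) : ℝ) * mu q.1 * p2 t q
            + ((q.2 - q.1 + 1 : ℤ) : ℝ) * lam q.2 * p2 t q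
            + ((q.2 - q.1 - 1 : ℤ) : ℝ) * mu q.2 * p2 t q
            - ((q.2 - q.1 : ℤ) : ℝ) * ((lam q.1 + mu q.1 + lam q.2 + mu q.2) * p2 t q)) := by
          apply Finset.sum_congr rfl
          intro q hq
          rcases (hmem q).mp hq with ⟨⟨hk1, hk2⟩, ⟨hl1, hl2⟩, hkl⟩
          have e1 : lam q.1 - mu q.1 = h q.1 := hh q.1 hk1 hk2
          have e2 : lam q.2 - mu q.2 = h q.2 := hh q.2 hl1 hl2
          rw [← e1, ← e2]
          push_cast
          ring
      _ = (∑ q ∈ S, ((q.2 - q.1 - 1 : ℤ) : ℝ) * lam q.1 * p2 t q)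
            + (∑ q ∈ S, ((q.2 - q.1 + 1 : ℤ) : ℝ) * mu q.1 * p2 t q)
            + (∑ q ∈ S, ((q.2 - q.1 + 1 : ℤ) : ℝ) * lam q.2 * p2 t q)
            + (∑ q ∈ S, ((q.2 - q.1 - 1 : ℤ) : ℝ) * mu q.2 * p2 t q)
            - ∑ q ∈ S, ((q.2 - q.1 : ℤ) : ℝ) * ((lam q.1 + mu q.1 + lam q.2 + mu q.2) * p2 t q) := by
          rw [Finset.sum_sub_distrib, Finset.sum_add_distrib, Finset.sum_add_distrib,
            Finset.sum_add_distrib]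
      _ = (∑ q ∈ S, (((q.2 - (q.1 - 1) - 1 : ℤ) : ℝ) * lam (q.1 - 1) * p2 t (q.1 - 1, q.2)))
            + (∑ q ∈ S.filter (fun q => q.1 + 1 < q.2),
                (((q.2 - (q.1 + 1) + 1 : ℤ) : ℝ) * mu (q.1 + 1) * p2 t (q.1 + 1, q.2)))
            + (∑ q ∈ S.filter (fun q => q.1 < q.2 - 1),
                (((q.2 - 1 - q.1 + 1 : ℤ) : ℝ) * lam (q.2 - 1) * p2 t (q.1, q.2 - 1)))
            + (∑ q ∈ S, (((q.2 + 1 - q.1 - 1 : ℤ) : ℝ) * mu (q.2 + 1) * p2 t (q.1, q.2 + 1)))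
            - ∑ q ∈ S, ((q.2 - q.1 : ℤ) : ℝ) * ((lam q.1 + mu q.1 + lam q.2 + mu q.2) * p2 t q) := by
          rw [A1, A2, A3, A4]
      _ = ∑ q ∈ S, ((q.2 - q.1 : ℤ) : ℝ) *
            (lam (q.1 - 1) * p2 t (q.1 - 1, q.2)
              + (if q.1 + 1 < q.2 then mu (q.1 + 1) * p2 t (q.1 + 1, q.2) else 0)
              + (if q.1 < q.2 - 1 then lam (q.2 - 1) * p2 t (q.1, q.2 - 1) else 0)
              + mu (q.2 + 1) * p2 t (q.1, q.2 + 1)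
              - (lam q.1 + mu q.1 + lam q.2 + mu q.2) * p2 t q) := by
          rw [Finset.sum_filter (s := S) (fun q => q.1 + 1 < q.2),
            Finset.sum_filter (s := S) (fun q => q.1 < q.2 - 1)]
          rw [← Finset.sum_add_distrib, ← Finset.sum_add_distrib, ← Finset.sum_add_distrib,
            ← Finset.sum_sub_distrib]
          apply Finset.sum_congr rfl
          intro q hq
          by_cases hc : q.1 + 1 < q.2 <;> by_cases hc' : q.1 < q.2 - 1 <;>
            simp only [hc, hc', if_true, if_false] <;> push_cast <;> ring
  -- F' ≤ -d * F
  have hFle : ∀ t : ℝ, (∑ q ∈ S, (h q.2 - h q.1) * p2 t q) ≤ -d * F t := by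
    intro t
    rw [hF]
    simp only [Finset.mul_sum]
    apply Finset.sum_le_sum
    intro q hq
    rcases (hmem q).mp hq with ⟨⟨hk1, hk2⟩, ⟨hl1, hl2⟩, hkl⟩
    have hklR : (q.1 : ℝ) < (q.2 : ℝ) := by exact_mod_cast hkl
    obtain ⟨c, hc, hcEq⟩ := exists_hasDerivAt_eq_slope h (deriv h) hklR
      (hdiff.continuous.continuousOn) (fun x _ => (hdiff x).hasDerivAt)
    have hcIcc : c ∈ Set.Icc (-(a : ℝ)) (a : ℝ) := by
      constructor
      · have : (-(a : ℤ) : ℝ) ≤ (q.1 : ℝ) := by exact_mod_cast hk1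
        push_cast at this
        linarith [hc.1]
      · have : (q.2 : ℝ) ≤ ((a : ℤ) : ℝ) := by exact_mod_cast hl2
        push_cast at this
        linarith [hc.2]
    have hne : (q.2 : ℝ) - q.1 ≠ 0 := by linarith
    have hslope : h q.2 - h q.1 = deriv h c * ((q.2 : ℝ) - q.1) := by
      rw [hcEq]
      exact (div_mul_cancel₀ _ hne).symm
    have hd' : deriv h c ≤ -d := hh' c hcIcc
    have hp : 0 ≤ p2 t q := hp2_nonneg t q
    have hpos : (0 : ℝ) < (q.2 : ℝ) - q.1 := by linarith
    calc (h q.2 - h q.1) * p2 t q = deriv h c * ((q.2 : ℝ) - q.1) * p2 t q := by rw [hslope]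
      _ ≤ (-d) * ((q.2 : ℝ) - q.1) * p2 t q := by
          apply mul_le_mul_of_nonneg_right _ hp
          exact mul_le_mul_of_nonneg_right hd' hpos.le
      _ = -d * (((q.2 - q.1 : ℤ) : ℝ) * p2 t q) := by push_cast; ring
  -- Gronwall: G = F * exp(d t) is antitone
  set G : ℝ → ℝ := fun s => F s * Real.exp (d * s) with hG
  have hGderiv : ∀ t : ℝ, HasDerivAt G
      ((∑ q ∈ S, (h q.2 - h q.1) * p2 t q) * Real.exp (d * t)
        + F t * (Real.exp (d * t) * (d * 1))) t := by
    intro t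
    exact (hFderiv t).mul (((hasDerivAt_id t).const_mul d).exp)
  have hGanti : Antitone G := by
    apply antitone_of_deriv_nonpos
    · intro t
      exact (hGderiv t).differentiableAt
    · intro t
      rw [(hGderiv t).deriv]
      have hexp : (0 : ℝ) < Real.exp (d * t) := Real.exp_pos _
      nlinarith [hFle t]
  -- F 0 = 2a
  have hF0 : F 0 = 2 * a := by
    show (∑ q ∈ S, ((q.2 - q.1 : ℤ) : ℝ) * p2 0 q) = 2 * a
    have hmem0 : ((-(a : ℤ), (a : ℤ)) : ℤ × ℤ) ∈ S :=
      (hmem _).mpr ⟨⟨le_refl _, by omega⟩, ⟨by omega, le_refl _⟩, by omega⟩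
    rw [Finset.sum_eq_single ((-(a : ℤ), (a : ℤ)) : ℤ × ℤ)]
    · have h1 : p2 0 (-(a : ℤ), (a : ℤ)) = 1 := by rw [hp2_init]; simp
      rw [h1]
      push_cast
      ring
    · intro q hq hq'
      simp [hp2_init, hq']
    · intro hq
      exact absurd hmem0 hq
  -- conclude
  intro t ht
  have hGle : G t ≤ G 0 := hGanti ht
  have hG0 : G 0 = 2 * a := by
    rw [hG]
    simp [hF0]
  have hFt : F t ≤ 2 * a * Real.exp (-(d * t)) := by
    have hexp : (0 : ℝ) < Real.exp (d * t) := Real.exp_pos _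
    have : F t * Real.exp (d * t) ≤ 2 * a := by rw [← hG0]; exact hGle
    have h2 : F t ≤ 2 * a / Real.exp (d * t) := (le_div_iff₀ hexp).mpr (by linarith)
    calc F t ≤ 2 * a / Real.exp (d * t) := h2
      _ = 2 * a * Real.exp (-(d * t)) := by rw [Real.exp_neg]; ring
  have hsum_le_F : ∑ q ∈ S, p2 t q ≤ F t := by
    rw [hF]
    apply Finset.sum_le_sum
    intro q hq
    rcases (hmem q).mp hq with ⟨_, _, hkl⟩
    have h1 : (1 : ℝ) ≤ ((q.2 - q.1 : ℤ) : ℝ) := by exact_mod_cast (by omega : (1:ℤ) ≤ q.2 - q.1)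
    nlinarith [hp2_nonneg t q]
  calc ∑ q ∈ S, p2 t q ≤ F t := hsum_le_F
    _ ≤ 2 * a * Real.exp (-(d * t)) := hFt
    _ = 2 * a * Real.exp (-d * t) := by ring_nf
end

section
/- For b ≥ σ√(2 log σ) (b a positive integer) and σ sufficiently large, the Gaussian sum S = Σ_{k=−b}^{b} exp(−k²/(2σ²)) satisfies √(2π)σ − (1+2√(2π)) ≤ S ≤ √(2π)σ + 1, and in particular √(2π)σ·e^{−b/σ²} ≤ S ≤ √(2π)σ·e^{b/σ²}. -/
open Finset

open MeasureTheory Real Filter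

private lemma exp_tail' {a : ℝ} (ha : 0 < a) (B : ℝ) :
    ∫ x in Set.Ioi B, Real.exp (-a * x) = Real.exp (-a * B) / a := by
  have hderiv : ∀ x ∈ Set.Ioi B, HasDerivAt (fun x => -Real.exp (-a * x) / a)
      (Real.exp (-a * x)) x := by
    intro x _
    have h1 : HasDerivAt (fun x : ℝ => -a * x) (-a) x := by
      simpa using (hasDerivAt_id x).const_mul (-a)
    have h2 := (h1.exp.div_const a).neg
    convert h2 using 1
    · ext y; ring
    · ext y; simp only [Pi.neg_apply]
    · ext y; simp only [Pi.neg_apply, neg_div]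
    · rw [mul_neg, neg_div, neg_neg, mul_div_assoc, div_self ha.ne', mul_one]
  have htend : Tendsto (fun x => -Real.exp (-a * x) / a) atTop (nhds 0) := by
    have h1 : Tendsto (fun x : ℝ => -a * x) atTop atBot :=
      Filter.Tendsto.const_mul_atTop_of_neg (neg_neg_iff_pos.mpr ha) tendsto_id
    have h2 : Tendsto (fun x : ℝ => Real.exp (-a * x)) atTop (nhds 0) :=
      Real.tendsto_exp_atBot.comp h1
    simpa [neg_div] using (h2.div_const a).neg
  have hint : IntegrableOn (fun x => Real.exp (-a * x)) (Set.Ioi B) :=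
    exp_neg_integrableOn_Ioi B ha
  have h := integral_Ioi_of_hasDerivAt_of_tendsto
    (Continuous.continuousWithinAt (by continuity)) hderiv hint htend
  rw [h]; ring


private lemma sym (σ : ℝ) (b : ℕ) (hb : 1 ≤ b) :
    ∑ k ∈ Icc (-(b : ℤ)) (b : ℤ), Real.exp (-(k : ℝ) ^ 2 / (2 * σ ^ 2))
      = 1 + 2 * ∑ i ∈ Finset.range b, Real.exp (-((1:ℝ) + i) ^ 2 / (2 * σ ^ 2)) := by
  set F : ℤ → ℝ := fun k => Real.exp (-(k : ℝ) ^ 2 / (2 * σ ^ 2)) with hF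
  have hbz : (1:ℤ) ≤ (b:ℤ) := by exact_mod_cast hb
  have e0 : Icc (-(b : ℤ)) (b : ℤ) = Finset.Ioc (-(b:ℤ)-1) (b:ℤ) := by
    ext k; simp
  have h1 : ((∑ k ∈ Finset.Ioc (-(b:ℤ)-1) (-1), F k) + ∑ k ∈ Finset.Ioc (-1:ℤ) (b:ℤ), F k)
      = ∑ k ∈ Finset.Ioc (-(b:ℤ)-1) (b:ℤ), F k :=
    by rw [← Finset.Ioc_union_Ioc_eq_Ioc (show (-(b:ℤ)-1) ≤ -1 by omega) (show (-1:ℤ) ≤ (b:ℤ) by omega),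
          Finset.sum_union (by rw [Finset.disjoint_left]; intro x hx hx'; simp at hx hx'; omega)]
  have h2 : ((∑ k ∈ Finset.Ioc (-1:ℤ) 0, F k) + ∑ k ∈ Finset.Ioc (0:ℤ) (b:ℤ), F k)
      = ∑ k ∈ Finset.Ioc (-1:ℤ) (b:ℤ), F k :=
    by rw [← Finset.Ioc_union_Ioc_eq_Ioc (show (-1:ℤ) ≤ 0 by omega) (show (0:ℤ) ≤ (b:ℤ) by omega),
          Finset.sum_union (by rw [Finset.disjoint_left]; intro x hx hx'; simp at hx hx'; omega)]
  have h3 : Finset.Ioc (-1:ℤ) 0 = {0} := by ext k; simp; omega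
  have h4 : ∑ k ∈ Finset.Ioc (-(b:ℤ)-1) (-1), F k = ∑ k ∈ Finset.Ioc (0:ℤ) (b:ℤ), F k := by
    refine Finset.sum_nbij' (i := fun k => -k) (j := fun k => -k) ?_ ?_ ?_ ?_ ?_
    · intro k hk; simp at hk ⊢; omega
    · intro k hk; simp at hk ⊢; omega
    · intro k _; ring
    · intro k _; ring
    · intro k _; simp [hF]
  have h5 : ∑ k ∈ Finset.Ioc (0:ℤ) (b:ℤ), F k
      = ∑ i ∈ Finset.range b, Real.exp (-((1:ℝ) + i) ^ 2 / (2 * σ ^ 2)) := by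
    refine (Finset.sum_nbij' (i := fun k => (k-1).toNat) (j := fun i => (i:ℤ)+1) ?_ ?_ ?_ ?_ ?_)
    · intro k hk; simp at hk ⊢; omega
    · intro i hi; simp at hi ⊢; omega
    · intro k hk; simp at hk ⊢; omega
    · intro i hi; simp
    · intro k hk; simp at hk
      have hc : ((k-1).toNat : ℝ) = (k:ℝ) - 1 := by
        have h := Int.toNat_of_nonneg (show (0:ℤ) ≤ k-1 by omega)
        exact_mod_cast congrArg (Int.cast : ℤ → ℝ) h
      simp only [hF, hc]
      congr 1; ring
  rw [e0, ← h1, ← h2, h3, h4, h5]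
  simp [hF]
  ring

private lemma core (σ : ℝ) (hσ : Real.exp 100 ≤ σ) (b : ℕ)
    (hb : σ * Real.sqrt (2 * Real.log σ) ≤ (b : ℝ)) :
    Real.sqrt (2 * Real.pi) * σ / 2 - 2 ≤ ∑ i ∈ Finset.range b,
        Real.exp (-((1:ℝ) + i) ^ 2 / (2 * σ ^ 2)) ∧
      ∑ i ∈ Finset.range b, Real.exp (-((1:ℝ) + i) ^ 2 / (2 * σ ^ 2))
        ≤ Real.sqrt (2 * Real.pi) * σ / 2 := by
  have hσ0 : (0:ℝ) < σ := lt_of_lt_of_le (Real.exp_pos 100) hσ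
  have hσ100 : (100:ℝ) ≤ σ := le_trans (by linarith [Real.add_one_le_exp (100:ℝ)]) hσ
  have hlog : (100:ℝ) ≤ Real.log σ := (Real.le_log_iff_exp_le hσ0).mpr hσ
  have hsqnn : (0:ℝ) ≤ Real.sqrt (2 * Real.log σ) := Real.sqrt_nonneg _
  have hsq14 : (14:ℝ) ≤ Real.sqrt (2 * Real.log σ) := by
    nlinarith [Real.sq_sqrt (show (0:ℝ) ≤ 2 * Real.log σ by linarith)]
  have hb14 : 14 * σ ≤ (b:ℝ) := by nlinarith
  have hbpos : (0:ℝ) < (b:ℝ) := by nlinarith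
  set g : ℝ → ℝ := fun x => Real.exp (-x ^ 2 / (2 * σ ^ 2)) with hg
  have hgeq : g = fun x => Real.exp (-(1/(2*σ^2)) * x^2) := by
    funext x; simp only [hg]; congr 1; ring
  have hInt : Integrable g := by
    rw [hgeq]; exact integrable_exp_neg_mul_sq (by positivity)
  have hgnn : ∀ x, 0 ≤ g x := fun x => (Real.exp_pos _).le
  have hIoi : ∫ x in Set.Ioi (0:ℝ), g x = Real.sqrt (2 * Real.pi) * σ / 2 := by
    rw [hgeq, integral_gaussian_Ioi]
    have h1 : Real.pi / (1/(2*σ^2)) = (2 * Real.pi) * σ^2 := by field_simp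
    rw [h1, Real.sqrt_mul (by positivity), Real.sqrt_sq hσ0.le]
  have hant : AntitoneOn g (Set.Ici (0:ℝ)) := by
    intro x hx y hy hxy
    simp only [hg]
    apply Real.exp_le_exp.mpr
    apply (div_le_div_iff_of_pos_right (by positivity)).mpr
    simp only [Set.mem_Ici] at hx
    nlinarith
  constructor
  · -- lower bound
    have hcmp := AntitoneOn.integral_le_sum (x₀ := (1:ℝ)) (a := b) (f := g)
      (hant.mono (Set.Icc_subset_Ici_self.trans (by intro x hx; simp at hx ⊢; linarith [hx])))
    have hIcc : ∫ x in (1:ℝ)..(1 + (b:ℕ)), g x = ∫ x in Set.Ioc (1:ℝ) (1 + (b:ℝ)), g x := by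
      rw [intervalIntegral.integral_of_le (by push_cast; linarith)]
    -- splitting
    have e1 : (∫ x in Set.Ioc (1:ℝ) (1 + (b:ℝ)), g x) + ∫ x in Set.Ioi (1 + (b:ℝ)), g x
        = ∫ x in Set.Ioi (1:ℝ), g x := by
      rw [← MeasureTheory.setIntegral_union (Set.Ioc_disjoint_Ioi le_rfl) measurableSet_Ioi
          hInt.integrableOn hInt.integrableOn, Set.Ioc_union_Ioi_eq_Ioi (by linarith)]
    have e2 : (∫ x in Set.Ioc (0:ℝ) 1, g x) + ∫ x in Set.Ioi (1:ℝ), g x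
        = ∫ x in Set.Ioi (0:ℝ), g x := by
      rw [← MeasureTheory.setIntegral_union (Set.Ioc_disjoint_Ioi le_rfl) measurableSet_Ioi
          hInt.integrableOn hInt.integrableOn, Set.Ioc_union_Ioi_eq_Ioi (by linarith)]
    have h01 : ∫ x in Set.Ioc (0:ℝ) 1, g x ≤ 1 := by
      calc ∫ x in Set.Ioc (0:ℝ) 1, g x ≤ ∫ _x in Set.Ioc (0:ℝ) 1, (1:ℝ) := by
            apply setIntegral_mono_on hInt.integrableOn (integrableOn_const (by simp))
              measurableSet_Ioc
            intro x _
            simp only [hg]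
            apply Real.exp_le_one_iff.mpr
            rw [neg_div]
            have : (0:ℝ) ≤ x^2 / (2*σ^2) := by positivity
            linarith
        _ = 1 := by simp
    -- tail bound
    have ha : (0:ℝ) < (b:ℝ)/(2*σ^2) := by positivity
    have htail : ∫ x in Set.Ioi ((b:ℝ)), g x ≤ 1 := by
      have hmono : ∫ x in Set.Ioi ((b:ℝ)), g x
          ≤ ∫ x in Set.Ioi ((b:ℝ)), Real.exp (-((b:ℝ)/(2*σ^2)) * x) := by
        apply setIntegral_mono_on hInt.integrableOn (exp_neg_integrableOn_Ioi _ ha)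
          measurableSet_Ioi
        intro x hx
        simp only [Set.mem_Ioi] at hx
        simp only [hg]
        apply Real.exp_le_exp.mpr
        have h2 : -((b:ℝ)/(2*σ^2)) * x = -((b:ℝ)*x)/(2*σ^2) := by ring
        rw [h2]
        exact (div_le_div_iff_of_pos_right (by positivity)).mpr (by nlinarith)
      rw [exp_tail' ha] at hmono
      have hbsq : 2 * σ^2 * Real.log σ ≤ (b:ℝ)^2 := by
        have h1 : (σ * Real.sqrt (2 * Real.log σ))^2 ≤ (b:ℝ)^2 :=
          pow_le_pow_left₀ (by positivity) hb 2
        have h2 := Real.sq_sqrt (show (0:ℝ) ≤ 2 * Real.log σ by linarith)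
        nlinarith
      have hexp : Real.exp (-((b:ℝ)/(2*σ^2)) * (b:ℝ)) ≤ 1/σ := by
        rw [show (1:ℝ)/σ = Real.exp (-Real.log σ) by
          rw [Real.exp_neg, Real.exp_log hσ0]; ring]
        apply Real.exp_le_exp.mpr
        rw [neg_mul, neg_le_neg_iff, div_mul_eq_mul_div, le_div_iff₀ (by positivity)]
        nlinarith
      have hfin : Real.exp (-((b:ℝ)/(2*σ^2)) * (b:ℝ)) / ((b:ℝ)/(2*σ^2)) ≤ 1 := by
        rw [div_le_one ha]
        calc Real.exp (-((b:ℝ)/(2*σ^2)) * (b:ℝ)) ≤ 1/σ := hexp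
          _ ≤ (b:ℝ)/(2*σ^2) := by
              rw [div_le_div_iff₀ hσ0 (by positivity)]; nlinarith
      linarith
    have htail2 : ∫ x in Set.Ioi (1 + (b:ℝ)), g x ≤ 1 := by
      refine le_trans ?_ htail
      apply setIntegral_mono_set hInt.integrableOn
        (Filter.Eventually.of_forall fun x => hgnn x)
      exact (Set.Ioi_subset_Ioi (by linarith)).eventuallyLE
    have hsum_eq : ∑ i ∈ Finset.range b, g (1 + (i:ℕ))
        = ∑ i ∈ Finset.range b, Real.exp (-((1:ℝ) + i) ^ 2 / (2 * σ ^ 2)) := rfl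
    have hnn2 : (0:ℝ) ≤ ∫ x in Set.Ioi (1 + (b:ℝ)), g x :=
      setIntegral_nonneg measurableSet_Ioi fun x _ => hgnn x
    calc Real.sqrt (2 * Real.pi) * σ / 2 - 2
        = (∫ x in Set.Ioi (0:ℝ), g x) - 2 := by rw [hIoi]
      _ ≤ ∫ x in Set.Ioc (1:ℝ) (1 + (b:ℝ)), g x := by linarith
      _ ≤ ∑ i ∈ Finset.range b, g (1 + (i:ℕ)) := by
            rw [← hIcc]; exact hcmp
      _ = _ := hsum_eq
  · -- upper bound
    have hcmp := AntitoneOn.sum_le_integral (x₀ := (0:ℝ)) (a := b) (f := g)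
      (hant.mono (by intro x hx; simp at hx ⊢; linarith [hx.1]))
    have hIcc : ∫ x in (0:ℝ)..(0 + (b:ℕ)), g x = ∫ x in Set.Ioc (0:ℝ) ((b:ℝ)), g x := by
      rw [intervalIntegral.integral_of_le (by push_cast; linarith)]
      norm_num
    have hmono : ∫ x in Set.Ioc (0:ℝ) ((b:ℝ)), g x ≤ ∫ x in Set.Ioi (0:ℝ), g x := by
      apply setIntegral_mono_set hInt.integrableOn
        (Filter.Eventually.of_forall fun x => hgnn x)
      exact Set.Ioc_subset_Ioi_self.eventuallyLE
    have hsum_eq : ∑ i ∈ Finset.range b, g ((0:ℝ) + ((i:ℕ) + 1 : ℕ))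
        = ∑ i ∈ Finset.range b, Real.exp (-((1:ℝ) + i) ^ 2 / (2 * σ ^ 2)) := by
      apply Finset.sum_congr rfl
      intro i _
      congr 1
      push_cast
      ring
    rw [hsum_eq] at hcmp
    rw [hIcc] at hcmp
    rw [← hIoi]
    linarith

/-- For integer `b ≥ σ√(2 log σ)` and `σ` sufficiently large, the Gaussian sum
`S = Σ_{k=−b}^{b} e^{−k²/(2σ²)}` satisfies
`√(2π)σ − (1+2√(2π)) ≤ S ≤ √(2π)σ + 1`, and in particular
`√(2π)σ·e^{−b/σ²} ≤ S ≤ √(2π)σ·e^{b/σ²}`. -/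
theorem stmt_19 :
    ∃ σ₀ : ℝ, ∀ σ : ℝ, σ₀ ≤ σ → ∀ b : ℕ,
      σ * Real.sqrt (2 * Real.log σ) ≤ (b : ℝ) →
      (Real.sqrt (2 * Real.pi) * σ - (1 + 2 * Real.sqrt (2 * Real.pi))
          ≤ ∑ k ∈ Icc (-(b : ℤ)) (b : ℤ), Real.exp (-(k : ℝ) ^ 2 / (2 * σ ^ 2)) ∧
        ∑ k ∈ Icc (-(b : ℤ)) (b : ℤ), Real.exp (-(k : ℝ) ^ 2 / (2 * σ ^ 2))
          ≤ Real.sqrt (2 * Real.pi) * σ + 1) ∧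
      (Real.sqrt (2 * Real.pi) * σ * Real.exp (-(b : ℝ) / σ ^ 2)
          ≤ ∑ k ∈ Icc (-(b : ℤ)) (b : ℤ), Real.exp (-(k : ℝ) ^ 2 / (2 * σ ^ 2)) ∧
        ∑ k ∈ Icc (-(b : ℤ)) (b : ℤ), Real.exp (-(k : ℝ) ^ 2 / (2 * σ ^ 2))
          ≤ Real.sqrt (2 * Real.pi) * σ * Real.exp ((b : ℝ) / σ ^ 2)) := by
  refine ⟨Real.exp 100, fun σ hσ b hb => ?_⟩
  have hσ0 : (0:ℝ) < σ := lt_of_lt_of_le (Real.exp_pos 100) hσ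
  have hσ100 : (100:ℝ) ≤ σ := le_trans (by linarith [Real.add_one_le_exp (100:ℝ)]) hσ
  have hlog : (100:ℝ) ≤ Real.log σ := (Real.le_log_iff_exp_le hσ0).mpr hσ
  have hsqnn : (0:ℝ) ≤ Real.sqrt (2 * Real.log σ) := Real.sqrt_nonneg _
  have hsq14 : (14:ℝ) ≤ Real.sqrt (2 * Real.log σ) := by
    nlinarith [Real.sq_sqrt (show (0:ℝ) ≤ 2 * Real.log σ by linarith)]
  have hb14 : 14 * σ ≤ (b:ℝ) := by nlinarith
  have hb1 : 1 ≤ b := by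
    by_contra h
    push_neg at h
    interval_cases b
    · norm_num at hb14; linarith
  have hcore := core σ hσ b hb
  have hsym := sym σ b hb1
  set S := ∑ k ∈ Icc (-(b : ℤ)) (b : ℤ), Real.exp (-(k : ℝ) ^ 2 / (2 * σ ^ 2)) with hS
  set s := Real.sqrt (2 * Real.pi) with hsdef
  have hs2 : (2:ℝ) ≤ s := by
    have := Real.sq_sqrt (show (0:ℝ) ≤ 2 * Real.pi by positivity)
    nlinarith [Real.pi_gt_three, Real.sqrt_nonneg (2 * Real.pi)]
  have hs3 : s ≤ (3:ℝ) := by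
    have := Real.sq_sqrt (show (0:ℝ) ≤ 2 * Real.pi by positivity)
    nlinarith [Real.pi_lt_d2, Real.sqrt_nonneg (2 * Real.pi)]
  have hlow : s * σ - 3 ≤ S := by rw [hsym]; linarith [hcore.1]
  have hup : S ≤ s * σ + 1 := by rw [hsym]; linarith [hcore.2]
  have h1 : s * σ - (1 + 2 * s) ≤ S := by linarith
  refine ⟨⟨h1, hup⟩, ?_, ?_⟩
  · -- second lower bound
    set x := (b:ℝ) / σ^2 with hx
    have hx0 : (0:ℝ) ≤ x := by positivity
    have hxσ : (14:ℝ) ≤ σ * x := by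
      rw [hx]
      rw [show σ * ((b:ℝ)/σ^2) = (b:ℝ)/σ by field_simp]
      rw [le_div_iff₀ hσ0]; linarith
    have hE : Real.exp (-x) * (1 + x) ≤ 1 := by
      have h := Real.add_one_le_exp x
      calc Real.exp (-x) * (1 + x) ≤ Real.exp (-x) * Real.exp x := by
            apply mul_le_mul_of_nonneg_left (by linarith) (Real.exp_pos _).le
        _ = 1 := by rw [← Real.exp_add]; norm_num
    have h1x : (0:ℝ) < 1 + x := by linarith
    have hEle : Real.exp (-x) ≤ 1/(1+x) := by
      rw [le_div_iff₀ h1x]; exact hE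
    have hstep : s * σ * Real.exp (-x) ≤ s * σ - (1 + 2 * s) := by
      calc s * σ * Real.exp (-x) ≤ s * σ * (1/(1+x)) := by
            apply mul_le_mul_of_nonneg_left hEle (by positivity)
        _ ≤ s * σ - (1 + 2 * s) := by
            rw [mul_one_div, div_le_iff₀ h1x]
            nlinarith [mul_nonneg (mul_nonneg (sub_nonneg.mpr hs2) hσ0.le) hx0,
              mul_nonneg (sub_nonneg.mpr hσ100) hx0,
              mul_nonneg (sub_nonneg.mpr hs3) hx0]
    have hneg : -(b:ℝ) / σ^2 = -x := by rw [hx]; ring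
    rw [hneg]
    linarith
  · -- second upper bound
    set x := (b:ℝ) / σ^2 with hx
    have hx0 : (0:ℝ) ≤ x := by positivity
    have hxσ : (14:ℝ) ≤ σ * x := by
      rw [hx]
      rw [show σ * ((b:ℝ)/σ^2) = (b:ℝ)/σ by field_simp]
      rw [le_div_iff₀ hσ0]; linarith
    have hstep : s * σ + 1 ≤ s * σ * Real.exp x := by
      have h := Real.add_one_le_exp x
      calc s * σ + 1 ≤ s * σ * (1 + x) := by
            nlinarith [mul_nonneg (mul_nonneg (sub_nonneg.mpr hs2) hσ0.le) hx0]
        _ ≤ s * σ * Real.exp x := by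
            apply mul_le_mul_of_nonneg_left (by linarith) (by positivity)
    linarith
end
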